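/- Let k ≥ 2 and let B be a weakly 2-wise balanced design over a finite linearly ordered set A such that |A| = k² + k + 1, |B| = k² + k + 1, every block contains exactly k + 1 points, and any two distinct points are contained together in exactly one block (i.e., A and B are the points and lines of a finite projective plane of order k). Let P_k = Γ_{B,3}. Then P_k is triangle-free, α(P_k) ≤ 2·(k² + k + 1), and χ(P_k) ≥ (k + 1)/2. -/

import Mathlib

/-!
Adjacent vertices `(x, C) ~ (y, D)` with `x < y` have distinct blocks `C ≠ D` both containing
`x`. In a triangle whose smallest point is `x`, the other two vertices therefore have distinct
blocks that both contain `x` and the smaller of their own two points, which is impossible in a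
weakly `2`-wise balanced design.

In an independent set, keep for each block only the vertex with the largest point: these
vertices have distinct blocks. Every other vertex `(x, C)` lies below some `(z, C)` of the set,
so no second vertex `(x, D)` can be in the set; hence the remaining vertices have distinct
points. Thus `α(P_k) ≤ |A| + |B|`, and since `P_k` has `(k² + k + 1)(k + 1)` vertices, each
colour class of a proper colouring being independent gives `χ(P_k) · 2(k² + k + 1) ≥
(k² + k + 1)(k + 1)`.
-/

open Finset

/-- `B` is a weakly `m`-wise balanced design over the finite set `A`:
every block is a nonempty subset of `A`, every point of `A` lies in at least
one block, and any `m` pairwise distinct points of `A` are contained together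
in at most one block. -/
def IsWeaklyBalancedDesign {α : Type*} [DecidableEq α] (m : ℕ)
    (A : Finset α) (B : Finset (Finset α)) : Prop :=
  (∀ C ∈ B, C ⊆ A) ∧
  (∀ C ∈ B, C.Nonempty) ∧
  (∀ x ∈ A, ∃ C ∈ B, x ∈ C) ∧
  (∀ S : Finset α, S ⊆ A → S.card = m → (B.filter fun C => S ⊆ C).card ≤ 1)

/-- The vertex set of `Γ_{B,m}`: all incidence pairs `(x, C)` with `x ∈ C ∈ B`. -/
def designVerts {α : Type*} [DecidableEq α] (B : Finset (Finset α)) :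
    Finset (α × Finset α) :=
  B.biUnion fun C => C.image fun x => (x, C)

/-- The graph `Γ_{B,m}` on incidence pairs: `(x, C₁)` and `(y, C₂)` are adjacent
iff `x < y`, `C₁ ≠ C₂` and `x ∈ C₂`, or symmetrically `y < x`, `C₂ ≠ C₁` and `y ∈ C₁`. -/
def designGraph {α : Type*} [inst : LinearOrder α] (B : Finset (Finset α)) :
    SimpleGraph (designVerts (α := α) B) where
  Adj u v :=
    (u.val.1 < v.val.1 ∧ u.val.2 ≠ v.val.2 ∧ u.val.1 ∈ v.val.2) ∨
    (v.val.1 < u.val.1 ∧ v.val.2 ≠ u.val.2 ∧ v.val.1 ∈ u.val.2)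
  symm := ⟨fun u v h => by tauto⟩
  loopless := ⟨fun u h => by
    rcases h with ⟨h, _, _⟩ | ⟨h, _, _⟩ <;> exact lt_irrefl _ h⟩

/-- The independence number of a graph: the largest size of an independent set of vertices. -/
noncomputable def indepNum {V : Type*} (G : SimpleGraph V) : ℕ :=
  sSup {n | ∃ s : Finset V, s.card = n ∧ ∀ x ∈ s, ∀ y ∈ s, ¬ G.Adj x y}

theorem IsWeaklyBalancedDesign.eq_of_pair_subset {α : Type*} [DecidableEq α] {A : Finset α}
    {B : Finset (Finset α)} (hB : IsWeaklyBalancedDesign 2 A B) {C D : Finset α}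
    (hC : C ∈ B) (hD : D ∈ B) {x y : α} (hxy : x ≠ y)
    (hxyC : {x, y} ⊆ C) (hxyD : {x, y} ⊆ D) : C = D :=
  Finset.card_le_one.mp (hB.2.2.2 {x, y} (hxyC.trans (hB.1 C hC)) (card_pair hxy))
    C (mem_filter.mpr ⟨hC, hxyC⟩) D (mem_filter.mpr ⟨hD, hxyD⟩)

theorem mem_designVerts {α : Type*} [DecidableEq α] {B : Finset (Finset α)}
    {v : α × Finset α} : v ∈ designVerts B ↔ v.2 ∈ B ∧ v.1 ∈ v.2 := by
  simp only [designVerts, mem_biUnion, mem_image]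
  constructor
  · rintro ⟨C, hC, x, hx, rfl⟩
    exact ⟨hC, hx⟩
  · exact fun ⟨hB, hx⟩ => ⟨v.2, hB, v.1, hx, rfl⟩

theorem card_designVerts {α : Type*} [DecidableEq α] {B : Finset (Finset α)} {r : ℕ}
    (hblocks : ∀ C ∈ B, C.card = r) : (designVerts B).card = B.card * r := by
  rw [designVerts, card_biUnion, sum_congr rfl fun C hC => ?_, sum_const, smul_eq_mul]
  · rw [card_image_of_injective _ fun a b h => (Prod.ext_iff.mp h).1, hblocks C hC]
  · intro C₁ _ C₂ _ hne
    simp only [Function.onFun, disjoint_left, mem_image]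
    rintro _ ⟨x, -, rfl⟩ ⟨y, -, h⟩
    exact hne (congrArg Prod.snd h).symm

theorem card_le_mul_of_forall_indep_card_le {V : Type*} [Fintype V] {G : SimpleGraph V}
    {n m : ℕ} (hG : G.Colorable n)
    (hindep : ∀ s : Finset V, (∀ x ∈ s, ∀ y ∈ s, ¬ G.Adj x y) → s.card ≤ m) :
    Fintype.card V ≤ n * m := by
  classical
  obtain ⟨c⟩ := hG
  rw [← card_univ, card_eq_sum_card_fiberwise (f := c) (t := univ) fun _ _ => mem_univ _]
  calc ∑ i : Fin n, (univ.filter fun v => c v = i).card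
      ≤ ∑ _i : Fin n, m := sum_le_sum fun i _ => hindep _ fun x hx y hy hadj =>
        c.valid hadj ((mem_filter.mp hx).2.trans (mem_filter.mp hy).2.symm)
    _ = n * m := by simp

theorem indepNum_le {V : Type*} {G : SimpleGraph V} {m : ℕ}
    (hindep : ∀ s : Finset V, (∀ x ∈ s, ∀ y ∈ s, ¬ G.Adj x y) → s.card ≤ m) :
    indepNum G ≤ m :=
  csSup_le ⟨0, ∅, rfl, by simp⟩ fun _ ⟨s, hs, hind⟩ => hs ▸ hindep s hind

namespace designGraph

variable {α : Type*} [LinearOrder α] {B : Finset (Finset α)} {u v w : designVerts (α := α) B}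

theorem fst_ne_of_adj (h : (designGraph B).Adj u v) : u.val.1 ≠ v.val.1 := by
  rcases h with ⟨h, -, -⟩ | ⟨h, -, -⟩
  exacts [h.ne, h.ne']

theorem snd_ne_and_mem_of_adj (h : (designGraph B).Adj u v) (hlt : u.val.1 < v.val.1) :
    u.val.2 ≠ v.val.2 ∧ u.val.1 ∈ v.val.2 := by
  rcases h with ⟨-, h⟩ | ⟨h, -, -⟩
  exacts [h, absurd hlt h.not_gt]

theorem not_adj_of_adj_of_adj_of_le {A : Finset α} (hB : IsWeaklyBalancedDesign 2 A B)
    (huv : (designGraph B).Adj u v) (huw : (designGraph B).Adj u w)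
    (hv : u.val.1 ≤ v.val.1) (hw : u.val.1 ≤ w.val.1) : ¬ (designGraph B).Adj v w := by
  intro hvw
  wlog hvw_lt : v.val.1 < w.val.1 generalizing v w
  · exact this huw huv hw hv hvw.symm
      ((not_lt.mp hvw_lt).lt_of_ne (fst_ne_of_adj hvw).symm)
  have hxv := (snd_ne_and_mem_of_adj huv (hv.lt_of_ne (fst_ne_of_adj huv))).2
  have hxw := (snd_ne_and_mem_of_adj huw (hw.lt_of_ne (fst_ne_of_adj huw))).2
  obtain ⟨hne, hyw⟩ := snd_ne_and_mem_of_adj hvw hvw_lt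
  have hyv := (mem_designVerts.mp v.prop).2
  refine hne (hB.eq_of_pair_subset (mem_designVerts.mp v.prop).1
    (mem_designVerts.mp w.prop).1 (fst_ne_of_adj huv) ?_ ?_) <;>
    simp [insert_subset_iff, *]

theorem cliqueFree_three {A : Finset α} (hB : IsWeaklyBalancedDesign 2 A B) :
    (designGraph B).CliqueFree 3 := by
  intro t ht
  obtain ⟨u, v, w, huv, huw, hvw, rfl⟩ := SimpleGraph.is3Clique_iff.mp ht
  obtain ⟨m, hm, hmin⟩ := exists_min_image {u, v, w} (fun x => x.val.1) (by simp)
  simp only [mem_insert, mem_singleton, forall_eq_or_imp, forall_eq] at hm hmin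
  rcases hm with rfl | rfl | rfl
  · exact not_adj_of_adj_of_adj_of_le hB huv huw hmin.2.1 hmin.2.2 hvw
  · exact not_adj_of_adj_of_adj_of_le hB huv.symm hvw hmin.1 hmin.2.2 huw
  · exact not_adj_of_adj_of_adj_of_le hB huw.symm hvw.symm hmin.1 hmin.2.1 huv

theorem indep_card_le {A : Finset α} (hBA : ∀ C ∈ B, C ⊆ A)
    (s : Finset (designVerts (α := α) B)) (hs : ∀ x ∈ s, ∀ y ∈ s, ¬ (designGraph B).Adj x y) :
    s.card ≤ B.card + A.card := by
  classical
  set IsTop := fun v : designVerts (α := α) B => ∀ w ∈ s, w.val.2 = v.val.2 → w.val.1 ≤ v.val.1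
  have htop : (s.filter IsTop).card ≤ B.card := by
    refine card_le_card_of_injOn (fun v => v.val.2)
      (fun v _ => (mem_designVerts.mp v.prop).1) fun u hu v hv huv => ?_
    obtain ⟨hu, hu_top⟩ := mem_filter.mp hu
    obtain ⟨hv, hv_top⟩ := mem_filter.mp hv
    exact Subtype.ext (Prod.ext (le_antisymm (hv_top u hu huv) (hu_top v hv huv.symm)) huv)
  have hrest : (s.filter fun v => ¬ IsTop v).card ≤ A.card := by
    refine card_le_card_of_injOn (fun v => v.val.1)
      (fun v _ => hBA _ (mem_designVerts.mp v.prop).1 (mem_designVerts.mp v.prop).2)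
      fun u hu v hv huv => ?_
    obtain ⟨-, hu_top⟩ := mem_filter.mp hu
    obtain ⟨hv, -⟩ := mem_filter.mp hv
    replace huv : u.val.1 = v.val.1 := huv
    by_contra hne
    simp only [IsTop, not_forall, not_le] at hu_top
    obtain ⟨w, hw, hwu, hlt⟩ := hu_top
    refine hs v hv w hw (Or.inl ⟨huv ▸ hlt, fun h => hne ?_, ?_⟩)
    · exact Subtype.ext (Prod.ext huv (hwu ▸ h).symm)
    · exact hwu ▸ huv ▸ (mem_designVerts.mp u.prop).2
  rw [← card_filter_add_card_filter_not IsTop]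
  exact add_le_add htop hrest

end designGraph

theorem projective_plane_designGraph_general {α : Type*} [LinearOrder α] (k : ℕ)
    (A : Finset α) (B : Finset (Finset α))
    (hB : IsWeaklyBalancedDesign 2 A B)
    (hA : A.card = k ^ 2 + k + 1) (hBcard : B.card = k ^ 2 + k + 1)
    (hblocks : ∀ C ∈ B, C.card = k + 1) :
    (designGraph B).CliqueFree 3 ∧
      indepNum (designGraph B) ≤ 2 * (k ^ 2 + k + 1) ∧
      ((k : ℝ) + 1) / 2 ≤ (((designGraph B).chromaticNumber.toNat : ℕ) : ℝ) := by
  have hindep : ∀ s : Finset (designVerts (α := α) B),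
      (∀ x ∈ s, ∀ y ∈ s, ¬ (designGraph B).Adj x y) → s.card ≤ 2 * (k ^ 2 + k + 1) :=
    fun s hs => (designGraph.indep_card_le hB.1 s hs).trans (by omega)
  refine ⟨designGraph.cliqueFree_three hB, indepNum_le hindep, ?_⟩
  set c := (designGraph B).chromaticNumber.toNat
  have hcount : (k + 1) * (k ^ 2 + k + 1) ≤ (2 * c) * (k ^ 2 + k + 1) := by
    have := card_le_mul_of_forall_indep_card_le
      (designGraph B).colorable_chromaticNumber_of_fintype hindep
    rw [Fintype.card_coe, card_designVerts hblocks, hBcard] at this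
    linarith
  have hc : k + 1 ≤ 2 * c := Nat.le_of_mul_le_mul_right hcount (by positivity)
  rw [div_le_iff₀ two_pos]
  exact_mod_cast hc.trans_eq (mul_comm 2 c)

/-- Let `k ≥ 2` and let `A` and `B` be the points and lines of a finite projective plane of
order `k`: a weakly `2`-wise balanced design with `|A| = |B| = k² + k + 1`, every block of
exactly `k + 1` points, and any two distinct points on exactly one common block. Then the
graph `P_k = Γ_{B,3}` is triangle-free, `α(P_k) ≤ 2(k² + k + 1)` and `χ(P_k) ≥ (k+1)/2`. -/
theorem projective_plane_designGraph {α : Type*} [LinearOrder α] (k : ℕ) (hk : 2 ≤ k)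
    (A : Finset α) (B : Finset (Finset α))
    (hB : IsWeaklyBalancedDesign 2 A B)
    (hA : A.card = k ^ 2 + k + 1) (hBcard : B.card = k ^ 2 + k + 1)
    (hblocks : ∀ C ∈ B, C.card = k + 1)
    (hpair : ∀ x ∈ A, ∀ y ∈ A, x ≠ y → (B.filter fun C => x ∈ C ∧ y ∈ C).card = 1) :
    (designGraph B).CliqueFree 3 ∧
      indepNum (designGraph B) ≤ 2 * (k ^ 2 + k + 1) ∧
      ((k : ℝ) + 1) / 2 ≤ (((designGraph B).chromaticNumber.toNat : ℕ) : ℝ) :=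
  projective_plane_designGraph_general k A B hB hA hBcard hblocks
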